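/- arXiv:2310.17165 — 10 statements merged into one kernel-verified Lean document; each statement's English description precedes it below -/
import Mathlib

section
/- Let q ∈ (0,1), x0 ∈ ℝ, T : ℝ → ℝ, and T0, T1 : ℝ × ℝ → ℝ. Suppose T1 is (Fréchet) differentiable at (x0, x0) with partial derivatives T1x (with respect to the first argument) and T1y (with respect to the second argument), the function y ↦ T0(x0, y) is differentiable at x0 with derivative T0y, and T(x) = T1(x, x)/q for all x ∈ ℝ. Then T is differentiable at x0 and T'(x0) − (T1y/q − T0y/(1−q)) = T0y/(1−q) + T1x/q; that is, the bias of the naive local estimator equals T0y/(1−q) + T1x/q. -/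
open Filter Topology

theorem HasFDerivAt.hasDerivAt_diag {𝕜 F : Type*} [NontriviallyNormedField 𝕜]
    [NormedAddCommGroup F] [NormedSpace 𝕜 F] {f : 𝕜 × 𝕜 → F} {L : 𝕜 × 𝕜 →L[𝕜] F} {x : 𝕜}
    (hf : HasFDerivAt f L (x, x)) :
    HasDerivAt (fun t => f (t, t)) (L (1, 0) + L (0, 1)) x := by
  have hdiag : HasDerivAt (fun t : 𝕜 => (t, t)) ((1, 0) + (0, 1)) x := by
    simpa using (hasDerivAt_id x).prodMk (hasDerivAt_id x)
  simpa only [map_add, Function.comp_def] using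
    hf.comp_hasDerivAt (f := fun t : 𝕜 => (t, t)) x hdiag

theorem bias_characterization_general
    (q x0 : ℝ)
    (T : ℝ → ℝ) (T1 : ℝ × ℝ → ℝ) (T0y T1x T1y : ℝ)
    (L : ℝ × ℝ →L[ℝ] ℝ)
    (hT1 : HasFDerivAt T1 L (x0, x0))
    (hT1x : L (1, 0) = T1x) (hT1y : L (0, 1) = T1y)
    (hT : ∀ x : ℝ, T x = T1 (x, x) / q) :
    DifferentiableAt ℝ T x0 ∧
      deriv T x0 - (T1y / q - T0y / (1 - q)) = T0y / (1 - q) + T1x / q := by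
  obtain rfl : T = fun x => T1 (x, x) / q := funext hT
  have hTd : HasDerivAt (fun x => T1 (x, x) / q) ((T1x + T1y) / q) x0 := by
    simpa only [hT1x, hT1y] using hT1.hasDerivAt_diag.div_const q
  refine ⟨hTd.differentiableAt, ?_⟩
  rw [hTd.deriv]
  ring

/-- characterization of the bias of the naive local estimator. -/
theorem bias_characterization
    (q x0 : ℝ) (hq0 : 0 < q) (hq1 : q < 1)
    (T : ℝ → ℝ) (T0 T1 : ℝ × ℝ → ℝ) (T0y T1x T1y : ℝ)
    (L : ℝ × ℝ →L[ℝ] ℝ)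
    (hT1 : HasFDerivAt T1 L (x0, x0))
    (hT1x : L (1, 0) = T1x) (hT1y : L (0, 1) = T1y)
    (hT0 : HasDerivAt (fun y => T0 (x0, y)) T0y x0)
    (hT : ∀ x : ℝ, T x = T1 (x, x) / q) :
    DifferentiableAt ℝ T x0 ∧
      deriv T x0 - (T1y / q - T0y / (1 - q)) = T0y / (1 - q) + T1x / q :=
  bias_characterization_general q x0 T T1 T0y T1x T1y L hT1 hT1x hT1y hT
end

section
/- Let p0 ∈ ℝ, D : ℝ → ℝ, and D0, D1 : ℝ × ℝ → ℝ. Suppose D1 is (Fréchet) differentiable at (p0, p0), D1(p, p) = D(p) for all p ∈ ℝ, and for each fixed y the map x ↦ D1(x, y) is nondecreasing. Then D is differentiable at p0 and ∂D1/∂y(p0, p0) ≤ D'(p0). Moreover, if for each fixed x the map y ↦ D0(x, y) is nondecreasing and ∂D0/∂y exists at (p0, p0), then ∂D0/∂y(p0, p0) ≥ 0. -/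
/-! By constant returns to scale `D` is `D1` restricted to the diagonal, so the chain rule gives
`D'(p0) = ∂ₓD1(p0, p0) + ∂_yD1(p0, p0)`, and the first summand is nonnegative because `D1` is
monotone in the control price. -/

open Filter Topology

section PartialDerivatives

variable {𝕜 F : Type*} [NontriviallyNormedField 𝕜] [NormedAddCommGroup F] [NormedSpace 𝕜 F]
  {f : 𝕜 × 𝕜 → F} {L : 𝕜 × 𝕜 →L[𝕜] F} {x y : 𝕜}

theorem HasFDerivAt.hasDerivAt_fst_slice (hf : HasFDerivAt f L (x, y)) :
    HasDerivAt (fun t => f (t, y)) (L (1, 0)) x :=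
  hf.comp_hasDerivAt x ((hasDerivAt_id' x).prodMk (hasDerivAt_const x y))

theorem HasFDerivAt.hasDerivAt_diagonal (hf : HasFDerivAt f L (x, x)) :
    HasDerivAt (fun t => f (t, t)) (L (1, 1)) x :=
  HasFDerivAt.comp_hasDerivAt (f := fun t => (t, t)) x hf
    ((hasDerivAt_id' x).prodMk (hasDerivAt_id' x))

end PartialDerivatives

/-- substitution and constant returns imply bounds on the
partial derivatives of the experimental demand functions. -/
theorem demand_partials_bounds
    (p0 : ℝ) (D : ℝ → ℝ) (D0 D1 : ℝ × ℝ → ℝ)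
    (L : ℝ × ℝ →L[ℝ] ℝ)
    (hD1 : HasFDerivAt D1 L (p0, p0))
    (hdiag : ∀ p : ℝ, D1 (p, p) = D p)
    (hmono1 : ∀ y : ℝ, Monotone (fun x => D1 (x, y))) :
    (DifferentiableAt ℝ D p0 ∧ L (0, 1) ≤ deriv D p0) ∧
      ∀ d0y : ℝ, (∀ x : ℝ, Monotone (fun y => D0 (x, y))) →
        HasDerivAt (fun y => D0 (p0, y)) d0y p0 → 0 ≤ d0y := by
  have hD : HasDerivAt D (L (1, 1)) p0 := funext hdiag ▸ hD1.hasDerivAt_diagonal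
  have hL10 : 0 ≤ L (1, 0) := hD1.hasDerivAt_fst_slice.nonneg_of_monotone (hmono1 p0)
  have hsplit : L (1, 1) = L (1, 0) + L (0, 1) := by
    rw [← map_add, Prod.mk_add_mk, add_zero, zero_add]
  refine ⟨⟨hD.differentiableAt, ?_⟩, fun d0y hmono0 hD0 => hD0.nonneg_of_monotone (hmono0 p0)⟩
  rw [hD.deriv]
  linarith
end

section
/- Let c ∈ ℝ, p0 > 0, D : ℝ → ℝ with D(p0) > 0 and D'(p0) < 0 (D differentiable at p0), let e_p(p0) := D'(p0)·p0/D(p0), and let Δ ∈ ℝ. Then a change of sign occurs, i.e. D(p0) + (p0 − c)·Δ ≤ 0 ≤ D(p0) + (p0 − c)·D'(p0), if and only if both (a) (p0 − c)/p0 ≤ −1/e_p(p0) and (b) −1/e_p(p0) ≤ ((p0 − c)/p0)·Δ/D'(p0) hold. -/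
section Markup

variable {𝕜 : Type*} [Field 𝕜] [LinearOrder 𝕜] [IsStrictOrderedRing 𝕜]

/-- Also in the junk case `D = 0`, since `(a / b)⁻¹ = b / a` holds unconditionally. -/
theorem neg_inv_elasticity_eq (d p D : 𝕜) : -(1 / (d * p / D)) = D / (-d) / p := by
  rw [one_div, inv_div]
  ring

theorem markup_le_neg_inv_elasticity_iff {m p d D : 𝕜} (hp : 0 < p) (hd : d < 0) :
    m / p ≤ -(1 / (d * p / D)) ↔ 0 ≤ D + m * d := by
  rw [neg_inv_elasticity_eq, div_le_div_iff_of_pos_right hp, le_div_iff₀ (neg_pos.2 hd)]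
  constructor <;> intro h <;> linarith

theorem neg_inv_elasticity_le_iff {m p d D : 𝕜} (Δ : 𝕜) (hp : 0 < p) (hd : d < 0) :
    -(1 / (d * p / D)) ≤ m / p * Δ / d ↔ D + m * Δ ≤ 0 := by
  have hmarkup : m / p * Δ / d = -(m * Δ) / (-d) / p := by ring
  rw [neg_inv_elasticity_eq, hmarkup, div_le_div_iff_of_pos_right hp,
    div_le_div_iff_of_pos_right (neg_pos.2 hd)]
  constructor <;> intro h <;> linarith

end Markup

theorem change_of_sign_iff_general
    (c p0 : ℝ) (hp0 : 0 < p0) (D : ℝ → ℝ)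
    (hD' : deriv D p0 < 0) (Δ : ℝ) :
    (D p0 + (p0 - c) * Δ ≤ 0 ∧ 0 ≤ D p0 + (p0 - c) * deriv D p0) ↔
      ((p0 - c) / p0 ≤ -(1 / (deriv D p0 * p0 / D p0)) ∧
        -(1 / (deriv D p0 * p0 / D p0)) ≤ (p0 - c) / p0 * Δ / deriv D p0) := by
  rw [markup_le_neg_inv_elasticity_iff hp0 hD', neg_inv_elasticity_le_iff Δ hp0 hD']
  exact and_comm

/-- a change of sign occurs iff both the markup inequality (a)
and the modified markup inequality (b) hold. -/
theorem change_of_sign_iff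
    (c p0 : ℝ) (hp0 : 0 < p0) (D : ℝ → ℝ)
    (hD : DifferentiableAt ℝ D p0)
    (hDpos : 0 < D p0) (hD' : deriv D p0 < 0) (Δ : ℝ) :
    (D p0 + (p0 - c) * Δ ≤ 0 ∧ 0 ≤ D p0 + (p0 - c) * deriv D p0) ↔
      ((p0 - c) / p0 ≤ -(1 / (deriv D p0 * p0 / D p0)) ∧
        -(1 / (deriv D p0 * p0 / D p0)) ≤ (p0 - c) / p0 * Δ / deriv D p0) :=
  change_of_sign_iff_general c p0 hp0 D hD' Δ
end

section
/- Let ρ > 0, ε > 0, V > 0, and β > 0. Then there exists exactly one s ∈ (0, ρ) satisfying the mean-field market balance equation (ρ − s)·(ε + s·V) = β·s·V. -/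
open Filter Topology

/-- existence and uniqueness of the mean-field steady state. -/
theorem steady_state_exists_unique
    (ρ ε V β : ℝ) (hρ : 0 < ρ) (hε : 0 < ε) (hV : 0 < V) (hβ : 0 < β) :
    ∃! s : ℝ, s ∈ Set.Ioo 0 ρ ∧ (ρ - s) * (ε + s * V) = β * s * V := by
  set f : ℝ → ℝ := fun s => (ρ - s) * (ε + s * V) - β * s * V with hf
  have hcont : ContinuousOn f (Set.Icc 0 ρ) := by
    apply Continuous.continuousOn; fun_prop
  have hfρ : f ρ < 0 := by
    simp only [hf]; nlinarith [mul_pos hβ (mul_pos hρ hV)]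
  have hf0 : 0 < f 0 := by
    simp only [hf]; nlinarith
  have hmem : (0:ℝ) ∈ Set.Ioo (f ρ) (f 0) := ⟨hfρ, hf0⟩
  have hsub := intermediate_value_Ioo' (le_of_lt hρ) hcont
  obtain ⟨s, hs, hfs⟩ := hsub hmem
  refine ⟨s, ⟨hs, by simpa [hf, sub_eq_zero] using hfs⟩, ?_⟩
  rintro t ⟨⟨ht0, htρ⟩, ht⟩
  obtain ⟨hs0, hsρ⟩ := hs
  have hseq : (ρ - s) * (ε + s * V) = β * s * V := by
    simpa [hf, sub_eq_zero] using hfs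
  have h3 : (t - s) * (V * (t + s) - (ρ * V - ε - β * V)) = 0 := by
    linear_combination hseq - ht
  rcases mul_eq_zero.mp h3 with h | h
  · linarith [sub_eq_zero.mp h]
  · exfalso
    have h4 : V * (t * s) = -(ρ * ε) := by linear_combination ht + t * h
    nlinarith [mul_pos hV (mul_pos ht0 hs0), mul_pos hρ hε]
end

section
/- Let ρ > 0, ε > 0, V > 0, and β > 0. Then the number s := ((ρ − β)V − ε + √(4ρεV + ((ρ − β)V − ε)²)) / (2V) lies in the interval (0, ρ) and satisfies (ρ − s)·(ε + s·V) = β·s·V; hence it is the unique solution of the market balance equation in (0, ρ). -/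
/-!
The balance equation `(ρ - s) (ε + s V) = β s V` is the quadratic `V s² - b s - ρ ε = 0` with
`b = (ρ - β) V - ε`. Its constant term `-ρ ε` is negative, so it has exactly one positive root,
the one with the `+ √` sign. That root lies below `ρ` because the quadratic is positive at `ρ`
(its value there is `ρ β V`), and a quadratic with negative constant term is increasing to the
right of its positive root.
-/

section Quadratic

variable {K : Type*} [Field K] [LinearOrder K] [IsStrictOrderedRing K] {a b c r s x : K}

theorem lt_mul_of_quadratic_eq_zero (hc : 0 < c) (hr : 0 < r) (hroot : a * r ^ 2 - b * r - c = 0) :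
    b < a * r := by
  by_contra! h
  nlinarith [mul_nonneg hr.le (sub_nonneg.mpr h)]

theorem eq_of_quadratic_eq_zero_of_pos (ha : 0 ≤ a) (hc : 0 < c) (hr : 0 < r) (hs : 0 < s)
    (hr_root : a * r ^ 2 - b * r - c = 0) (hs_root : a * s ^ 2 - b * s - c = 0) : s = r := by
  have hbr := lt_mul_of_quadratic_eq_zero hc hr hr_root
  have hbs := lt_mul_of_quadratic_eq_zero hc hs hs_root
  -- distinct roots would give `a s = b - a r < 0`
  have hfactor : (s - r) * (a * (s + r) - b) = 0 := by linear_combination hs_root - hr_root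
  rcases mul_eq_zero.mp hfactor with h | h
  · exact sub_eq_zero.mp h
  · nlinarith [mul_nonneg ha hs.le]

theorem lt_of_quadratic_pos (ha : 0 ≤ a) (hc : 0 < c) (hr : 0 < r) (hx : 0 < x)
    (hroot : a * r ^ 2 - b * r - c = 0) (hpos : 0 < a * x ^ 2 - b * x - c) : r < x := by
  have hbr := lt_mul_of_quadratic_eq_zero hc hr hroot
  have hfactor : a * x ^ 2 - b * x - c = (x - r) * (a * (x + r) - b) := by
    linear_combination hroot
  have hslope : 0 ≤ a * (x + r) - b := by nlinarith [mul_nonneg ha hx.le]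
  by_contra! h
  nlinarith [mul_nonneg (sub_nonneg.mpr h) hslope]

end Quadratic

noncomputable def quadPosRoot (a b c : ℝ) : ℝ := (b + √(b ^ 2 + 4 * a * c)) / (2 * a)

theorem quadPosRoot_isRoot {a b c : ℝ} (ha : a ≠ 0) (hdisc : 0 ≤ b ^ 2 + 4 * a * c) :
    a * quadPosRoot a b c ^ 2 - b * quadPosRoot a b c - c = 0 := by
  have hsq := Real.sq_sqrt hdisc
  unfold quadPosRoot
  generalize √(b ^ 2 + 4 * a * c) = q at hsq ⊢
  field_simp
  linear_combination hsq

theorem quadPosRoot_pos {a b c : ℝ} (ha : 0 < a) (hc : 0 < c) : 0 < quadPosRoot a b c := by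
  have hb : -b < √(b ^ 2 + 4 * a * c) := by
    calc -b ≤ |b| := neg_le_abs b
      _ = √(b ^ 2) := (Real.sqrt_sq_eq_abs b).symm
      _ < √(b ^ 2 + 4 * a * c) := Real.sqrt_lt_sqrt (sq_nonneg b) (by linarith [mul_pos ha hc])
  exact div_pos (by linarith) (by linarith)

theorem market_balance_iff {R : Type*} [CommRing R] (ρ ε V β s : R) :
    (ρ - s) * (ε + s * V) = β * s * V ↔ V * s ^ 2 - ((ρ - β) * V - ε) * s - ρ * ε = 0 := by
  rw [← sub_eq_zero, ← neg_eq_zero]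
  ring_nf

/-- closed form for the unique steady state. -/
theorem steady_state_closed_form
    (ρ ε V β : ℝ) (hρ : 0 < ρ) (hε : 0 < ε) (hV : 0 < V) (hβ : 0 < β) :
    (((ρ - β) * V - ε + Real.sqrt (4 * ρ * ε * V + ((ρ - β) * V - ε) ^ 2)) / (2 * V))
        ∈ Set.Ioo 0 ρ ∧
      (ρ - ((ρ - β) * V - ε + Real.sqrt (4 * ρ * ε * V + ((ρ - β) * V - ε) ^ 2)) / (2 * V))
          * (ε + (((ρ - β) * V - ε + Real.sqrt (4 * ρ * ε * V + ((ρ - β) * V - ε) ^ 2)) / (2 * V)) * V)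
        = β * (((ρ - β) * V - ε + Real.sqrt (4 * ρ * ε * V + ((ρ - β) * V - ε) ^ 2)) / (2 * V)) * V ∧
      ∀ s' : ℝ, s' ∈ Set.Ioo 0 ρ → (ρ - s') * (ε + s' * V) = β * s' * V →
        s' = ((ρ - β) * V - ε + Real.sqrt (4 * ρ * ε * V + ((ρ - β) * V - ε) ^ 2)) / (2 * V) := by
  rw [show 4 * ρ * ε * V + ((ρ - β) * V - ε) ^ 2
      = ((ρ - β) * V - ε) ^ 2 + 4 * V * (ρ * ε) by ring]
  set b := (ρ - β) * V - ε
  rw [show (b + √(b ^ 2 + 4 * V * (ρ * ε))) / (2 * V) = quadPosRoot V b (ρ * ε) from rfl]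
  have hc : 0 < ρ * ε := mul_pos hρ hε
  have hroot := quadPosRoot_isRoot (b := b) (c := ρ * ε) hV.ne' (by positivity)
  have hpos := quadPosRoot_pos (b := b) (c := ρ * ε) hV hc
  have hquad_at_ρ : 0 < V * ρ ^ 2 - b * ρ - ρ * ε := by
    rw [show V * ρ ^ 2 - b * ρ - ρ * ε = ρ * β * V by ring]
    positivity
  refine ⟨⟨hpos, lt_of_quadratic_pos hV.le hc hpos hρ hroot hquad_at_ρ⟩,
    (market_balance_iff ρ ε V β _).mpr hroot, fun s hs hbal => ?_⟩
  exact eq_of_quadratic_eq_zero_of_pos hV.le hc hpos hs.1 hroot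
    ((market_balance_iff ρ ε V β s).mp hbal)
end

section
/- Let ρ > 0, ε > 0, β > 0, and for each V > 0 let s*(V) be the unique s ∈ (0, ρ) with (ρ − s)(ε + sV) = β s V. Then s* is strictly decreasing in V: if 0 < V₁ < V₂ then s*(V₁) > s*(V₂). Consequently, since the valuation v(p) is strictly decreasing in price, the steady-state availability is strictly increasing in price and the steady-state booking rate ρ − s* is strictly decreasing in price. -/
open Filter Topology

/-- the steady-state availability is strictly decreasing in the
valuation; consequently, availability is strictly increasing in price and the
booking rate strictly decreasing in price, whenever the valuation is strictly
decreasing in price. -/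
theorem steady_state_strict_anti_in_valuation
    (ρ ε β : ℝ) (hρ : 0 < ρ) (hε : 0 < ε) (hβ : 0 < β)
    (s : ℝ → ℝ)
    (hs : ∀ V : ℝ, 0 < V →
      s V ∈ Set.Ioo 0 ρ ∧ (ρ - s V) * (ε + s V * V) = β * s V * V) :
    (∀ V₁ V₂ : ℝ, 0 < V₁ → V₁ < V₂ → s V₂ < s V₁) ∧
      ∀ v : ℝ → ℝ, (∀ p : ℝ, 0 < v p) → StrictAnti v →
        StrictMono (fun p => s (v p)) ∧ StrictAnti (fun p => ρ - s (v p)) := by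
  have key : ∀ V : ℝ, 0 < V →
      (ρ - s V) * ε = s V * V * (β + s V - ρ) ∧ 0 < β + s V - ρ := by
    intro V hV
    obtain ⟨⟨h0, hρs⟩, heq⟩ := hs V hV
    have h1 : (ρ - s V) * ε = s V * V * (β + s V - ρ) := by nlinarith [heq]
    refine ⟨h1, ?_⟩
    have hpos : 0 < (ρ - s V) * ε := mul_pos (by linarith) hε
    rw [h1] at hpos
    have hsV : 0 < s V * V := mul_pos h0 hV
    nlinarith [hpos, hsV]
  have main : ∀ V₁ V₂ : ℝ, 0 < V₁ → V₁ < V₂ → s V₂ < s V₁ := by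
    intro V₁ V₂ hV₁ hlt
    by_contra hcon
    push_neg at hcon
    have hV₂ : 0 < V₂ := lt_trans hV₁ hlt
    obtain ⟨e1, p1⟩ := key V₁ hV₁
    obtain ⟨e2, p2⟩ := key V₂ hV₂
    obtain ⟨⟨h01, hρ1⟩, _⟩ := hs V₁ hV₁
    obtain ⟨⟨h02, hρ2⟩, _⟩ := hs V₂ hV₂
    -- s V₁ ≤ s V₂ gives (ρ - s V₂) ε ≤ (ρ - s V₁) ε = s V₁ V₁ (β+s V₁-ρ)
    -- < s V₂ V₂ (β + s V₂ - ρ) = (ρ - s V₂) ε, contradiction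
    have hsv : s V₁ * V₁ < s V₂ * V₂ := by nlinarith
    have h1 : s V₁ * V₁ * (β + s V₁ - ρ) < s V₂ * V₂ * (β + s V₂ - ρ) := by
      nlinarith [mul_pos h02 hV₂]
    nlinarith [e1, e2]
  refine ⟨main, fun v hv hanti => ?_⟩
  constructor
  · intro p q hpq
    exact main (v q) (v p) (hv q) (hanti hpq)
  · intro p q hpq
    simp only
    have := main (v q) (v p) (hv q) (hanti hpq)
    linarith
end

section
/- Let ρ > 0, ε > 0, V > 0, and for each β > 0 let s*(β) be the unique s ∈ (0, ρ) with (ρ − s)(ε + sV) = β s V. Then β·s*(β) → ρε/V as β → ∞. -/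
open Filter Topology

/-- β · s*(β) → ρε/V as β → ∞. -/
theorem beta_mul_steady_state_tendsto
    (ρ ε V : ℝ) (hρ : 0 < ρ) (hε : 0 < ε) (hV : 0 < V)
    (s : ℝ → ℝ)
    (hs : ∀ β : ℝ, 0 < β →
      s β ∈ Set.Ioo 0 ρ ∧ (ρ - s β) * (ε + s β * V) = β * s β * V) :
    Tendsto (fun β => β * s β) atTop (𝓝 (ρ * ε / V)) := by
  have hs0 : Tendsto s atTop (𝓝 0) := by
    have hup : ∀ᶠ β in atTop, s β ≤ (ρ * (ε + ρ * V) / V) / β := by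
      filter_upwards [eventually_gt_atTop 0] with β hβ
      obtain ⟨⟨h1, h2⟩, heq⟩ := hs β hβ
      have hsle : β * s β * V ≤ ρ * (ε + ρ * V) := by
        rw [← heq]
        apply mul_le_mul (by linarith) (by nlinarith) (by nlinarith) hρ.le
      rw [div_div, le_div_iff₀ (by positivity : (0:ℝ) < V * β)]
      nlinarith
    have hlo : ∀ᶠ β in atTop, 0 ≤ s β := by
      filter_upwards [eventually_gt_atTop 0] with β hβ
      exact ((hs β hβ).1.1).le
    have htend : Tendsto (fun β => (ρ * (ε + ρ * V) / V) / β) atTop (𝓝 0) :=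
      tendsto_const_nhds.div_atTop tendsto_id
    exact squeeze_zero' hlo hup htend
  have heqv : ∀ᶠ β in atTop, β * s β = (ρ - s β) * (ε + s β * V) / V := by
    filter_upwards [eventually_gt_atTop 0] with β hβ
    obtain ⟨⟨h1, h2⟩, heq⟩ := hs β hβ
    field_simp
    linarith [heq]
  have hlim : Tendsto (fun β => (ρ - s β) * (ε + s β * V) / V) atTop
      (𝓝 ((ρ - 0) * (ε + 0 * V) / V)) := by
    exact (((tendsto_const_nhds.sub hs0).mul
      (tendsto_const_nhds.add (hs0.mul_const V))).div_const V)
  have : (ρ - 0) * (ε + 0 * V) / V = ρ * ε / V := by ring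
  rw [this] at hlim
  exact hlim.congr' (heqv.mono fun β h => h.symm)
end

section
/- Let ρ > 0, ε > 0, V > 0, and p, c, V' ∈ ℝ. For each β > 0 let s*(β) be the unique s ∈ (0, ρ) with (ρ − s)(ε + sV) = β s V, and define the normalized profit treatment effect G(β) := (ρ − s*(β))/β + (p − c)·s*(β)·V'·ε / ((ε + s*(β)·V)² + β·V·ε). Then as β → 0⁺, G(β) → ρV/(ε + ρV) + (p − c)·ρ·V'·ε/(ε + ρV)². -/
open Filter Topology

/-- demand-constrained limit of the normalized profit
treatment effect. -/
theorem GTE_limit_beta_zero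
    (ρ ε V : ℝ) (p c V' : ℝ) (hρ : 0 < ρ) (hε : 0 < ε) (hV : 0 < V)
    (s : ℝ → ℝ)
    (hs : ∀ β : ℝ, 0 < β →
      s β ∈ Set.Ioo 0 ρ ∧ (ρ - s β) * (ε + s β * V) = β * s β * V) :
    Tendsto
      (fun β =>
        (ρ - s β) / β + (p - c) * s β * V' * ε / ((ε + s β * V) ^ 2 + β * V * ε))
      (𝓝[>] 0)
      (𝓝 (ρ * V / (ε + ρ * V) + (p - c) * ρ * V' * ε / (ε + ρ * V) ^ 2)) := by
  have hmem : ∀ᶠ β in 𝓝[>] (0:ℝ), 0 < β := self_mem_nhdsWithin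
  -- denominator positivity
  have hden : ∀ β : ℝ, 0 < β → 0 < ε + s β * V := by
    intro β hβ
    have h := (hs β hβ).1
    nlinarith [h.1, h.2]
  -- s β → ρ by squeeze
  have hs_tendsto : Tendsto s (𝓝[>] (0:ℝ)) (𝓝 ρ) := by
    have hlow : ∀ᶠ β in 𝓝[>] (0:ℝ), ρ - β * ρ * V / ε ≤ s β := by
      filter_upwards [hmem] with β hβ
      obtain ⟨⟨hs0, hsρ⟩, heq⟩ := hs β hβ
      have hd := hden β hβ
      have h1 : (ρ - s β) = β * s β * V / (ε + s β * V) := by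
        field_simp at heq ⊢; linarith [heq]
      have h2 : β * s β * V / (ε + s β * V) ≤ β * ρ * V / ε := by
        apply div_le_div₀ (by positivity) (by nlinarith [mul_pos (mul_pos hβ hV) (sub_pos.mpr hsρ)]) hε (by nlinarith [mul_pos hs0 hV])
      linarith
    have hhigh : ∀ᶠ β in 𝓝[>] (0:ℝ), s β ≤ ρ := by
      filter_upwards [hmem] with β hβ
      exact le_of_lt (hs β hβ).1.2
    have hlim : Tendsto (fun β : ℝ => ρ - β * ρ * V / ε) (𝓝[>] (0:ℝ)) (𝓝 ρ) := by
      have : Tendsto (fun β : ℝ => ρ - β * ρ * V / ε) (𝓝 (0:ℝ)) (𝓝 (ρ - 0 * ρ * V / ε)) := by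
        apply Tendsto.sub tendsto_const_nhds
        exact ((tendsto_id.mul_const ρ).mul_const V).div_const ε
      simpa using this.mono_left nhdsWithin_le_nhds
    exact tendsto_of_tendsto_of_tendsto_of_le_of_le' hlim tendsto_const_nhds hlow hhigh
  have hβ_tendsto : Tendsto (fun β : ℝ => β) (𝓝[>] (0:ℝ)) (𝓝 0) :=
    tendsto_id.mono_left nhdsWithin_le_nhds
  -- rewrite the function eventually
  have hcongr : ∀ᶠ β in 𝓝[>] (0:ℝ),
      (ρ - s β) / β + (p - c) * s β * V' * ε / ((ε + s β * V) ^ 2 + β * V * ε)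
      = s β * V / (ε + s β * V)
        + (p - c) * s β * V' * ε / ((ε + s β * V) ^ 2 + β * V * ε) := by
    filter_upwards [hmem] with β hβ
    obtain ⟨⟨hs0, hsρ⟩, heq⟩ := hs β hβ
    have hd := hden β hβ
    have : (ρ - s β) / β = s β * V / (ε + s β * V) := by
      rw [div_eq_div_iff (ne_of_gt hβ) (ne_of_gt hd)]
      linarith [heq]
    rw [this]
  rw [tendsto_congr' hcongr]
  have hdρ : ε + ρ * V ≠ 0 := by positivity
  have hlim1 : Tendsto (fun β => s β * V / (ε + s β * V)) (𝓝[>] (0:ℝ))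
      (𝓝 (ρ * V / (ε + ρ * V))) :=
    ((hs_tendsto.mul_const V).div (tendsto_const_nhds.add (hs_tendsto.mul_const V)) hdρ)
  have hlim2 : Tendsto (fun β => (p - c) * s β * V' * ε / ((ε + s β * V) ^ 2 + β * V * ε))
      (𝓝[>] (0:ℝ)) (𝓝 ((p - c) * ρ * V' * ε / (ε + ρ * V) ^ 2)) := by
    have hnum : Tendsto (fun β => (p - c) * s β * V' * ε) (𝓝[>] (0:ℝ))
        (𝓝 ((p - c) * ρ * V' * ε)) :=
      (((tendsto_const_nhds.mul hs_tendsto).mul_const V').mul_const ε)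
    have hden2 : Tendsto (fun β => (ε + s β * V) ^ 2 + β * V * ε) (𝓝[>] (0:ℝ))
        (𝓝 ((ε + ρ * V) ^ 2 + 0 * V * ε)) := by
      exact ((tendsto_const_nhds.add (hs_tendsto.mul_const V)).pow 2).add
        ((hβ_tendsto.mul_const V).mul_const ε)
    have hden2' : Tendsto (fun β => (ε + s β * V) ^ 2 + β * V * ε) (𝓝[>] (0:ℝ))
        (𝓝 ((ε + ρ * V) ^ 2)) := by simpa using hden2
    exact hnum.div hden2' (by positivity)
  exact hlim1.add hlim2
end

section
/- Let ρ > 0, ε > 0, V > 0, and p, c, V' ∈ ℝ. For each β > 0 let s*(β) be the unique s ∈ (0, ρ) with (ρ − s)(ε + sV) = β s V. Define the normalized listing-side bias B_LR(β) := (p − c)·(−s*(β)²·V·V'·(ε + s*(β)·V)) / (((ε + s*(β)·V) + β·V)·((s*(β)·V + ε)² + β·V·ε)) and the normalized customer-side bias B_CR(β) := −(p − c)·β·ε²·V·V'·s*(β) / ((V·s*(β) + ε)²·((s*(β)·V + ε)² + β·V·ε)). Then as β → 0⁺, B_CR(β) → 0 while B_LR(β) → −(p − c)·ρ²·V·V'/(ε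 + ρV)²; that is, in the demand-constrained limit the customer-side experiment is unbiased while the listing-side experiment has nonvanishing bias. -/
/-!
The balance equation gives `(ρ - s) ε ≤ (ρ - s)(ε + sV) = β s V ≤ β ρ V`, so
`0 ≤ ρ - s*(β) ≤ β ρ V / ε` and `s*(β) → ρ` as `β → 0⁺`. Both biases are continuous functions
of `(β, s)` at `(0, ρ)`, where their denominators are positive, so their limits are their values
there; the factor `β` makes the customer-side value vanish.
-/

open Filter Topology

theorem sub_le_div_of_balance {ρ ε V β s : ℝ} (hε : 0 < ε) (hV : 0 ≤ V) (hβ : 0 ≤ β)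
    (hs0 : 0 ≤ s) (hsρ : s ≤ ρ) (h : (ρ - s) * (ε + s * V) = β * s * V) :
    ρ - s ≤ β * ρ * V / ε := by
  rw [le_div_iff₀ hε]
  calc (ρ - s) * ε ≤ (ρ - s) * ε + (ρ - s) * (s * V) :=
        le_add_of_nonneg_right (mul_nonneg (sub_nonneg.2 hsρ) (mul_nonneg hs0 hV))
    _ = β * s * V := by rw [← h]; ring
    _ ≤ β * ρ * V := by gcongr

theorem tendsto_nhdsGT_zero_of_balance {ρ ε V : ℝ} (hε : 0 < ε) (hV : 0 ≤ V) {s : ℝ → ℝ}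
    (hs : ∀ β : ℝ, 0 < β →
      s β ∈ Set.Icc 0 ρ ∧ (ρ - s β) * (ε + s β * V) = β * s β * V) :
    Tendsto s (𝓝[>] 0) (𝓝 ρ) := by
  have hlow : Tendsto (fun β : ℝ => ρ - β * ρ * V / ε) (𝓝[>] 0) (𝓝 ρ) :=
    ((by fun_prop : Continuous fun β : ℝ => ρ - β * ρ * V / ε).tendsto' 0 ρ (by simp)).mono_left
      nhdsWithin_le_nhds
  refine tendsto_of_tendsto_of_tendsto_of_le_of_le' hlow tendsto_const_nhds ?_ ?_ <;>
    filter_upwards [self_mem_nhdsWithin] with β (hβ : 0 < β)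
  · obtain ⟨⟨hs0, hsρ⟩, h⟩ := hs β hβ
    linarith [sub_le_div_of_balance hε hV hβ.le hs0 hsρ h]
  · exact (hs β hβ).1.2

/-- in the demand-constrained limit β → 0⁺, the customer-side
bias vanishes while the listing-side bias does not. -/
theorem bias_limits_beta_zero
    (ρ ε V : ℝ) (p c V' : ℝ) (hρ : 0 < ρ) (hε : 0 < ε) (hV : 0 < V)
    (s : ℝ → ℝ)
    (hs : ∀ β : ℝ, 0 < β →
      s β ∈ Set.Ioo 0 ρ ∧ (ρ - s β) * (ε + s β * V) = β * s β * V) :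
    Tendsto
        (fun β =>
          -((p - c) * β * ε ^ 2 * V * V' * s β) /
            ((V * s β + ε) ^ 2 * ((s β * V + ε) ^ 2 + β * V * ε)))
        (𝓝[>] 0) (𝓝 0) ∧
      Tendsto
        (fun β =>
          (p - c) * (-(s β ^ 2) * V * V' * (ε + s β * V)) /
            (((ε + s β * V) + β * V) * ((s β * V + ε) ^ 2 + β * V * ε)))
        (𝓝[>] 0)
        (𝓝 (-((p - c) * ρ ^ 2 * V * V') / (ε + ρ * V) ^ 2)) := by
  have hsρ : Tendsto s (𝓝[>] 0) (𝓝 ρ) :=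
    tendsto_nhdsGT_zero_of_balance hε hV.le fun β hβ =>
      ⟨Set.Ioo_subset_Icc_self (hs β hβ).1, (hs β hβ).2⟩
  have hpair : Tendsto (fun β => (β, s β)) (𝓝[>] 0) (𝓝 ((0 : ℝ), ρ)) :=
    (tendsto_id.mono_left nhdsWithin_le_nhds).prodMk_nhds hsρ
  have hD : ρ * V + ε ≠ 0 := by positivity
  constructor
  · have hF : ContinuousAt (fun q : ℝ × ℝ => -((p - c) * q.1 * ε ^ 2 * V * V' * q.2) /
        ((V * q.2 + ε) ^ 2 * ((q.2 * V + ε) ^ 2 + q.1 * V * ε))) (0, ρ) := by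
      fun_prop (disch := simp [mul_comm V, hD])
    simpa [Function.comp_def] using hF.tendsto.comp hpair
  · have hF : ContinuousAt (fun q : ℝ × ℝ => (p - c) * (-(q.2 ^ 2) * V * V' * (ε + q.2 * V)) /
        (((ε + q.2 * V) + q.1 * V) * ((q.2 * V + ε) ^ 2 + q.1 * V * ε))) (0, ρ) := by
      fun_prop (disch := simp [add_comm ε, hD])
    have hval : (p - c) * (-(ρ ^ 2) * V * V' * (ε + ρ * V)) /
        (((ε + ρ * V) + 0 * V) * ((ρ * V + ε) ^ 2 + 0 * V * ε)) =
        -((p - c) * ρ ^ 2 * V * V') / (ε + ρ * V) ^ 2 := by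
      simp only [zero_mul, add_zero, add_comm (ρ * V)]
      field_simp
    have h := hF.tendsto.comp hpair
    dsimp only [Function.comp_def] at h
    rwa [hval] at h
end

section
/- Let ρ > 0, ε > 0, V > 0, and p, c, V' ∈ ℝ. For each β > 0 let s*(β) be the unique s ∈ (0, ρ) with (ρ − s)(ε + sV) = β s V. Define Gτ(β) := (ρ − s*(β)) + (p − c)·β·s*(β)·V'·ε/((ε + s*(β)·V)² + β·V·ε), BτLR(β) := β·(p − c)·(−s*(β)²·V·V'·(ε + s*(β)·V)) / (((ε + s*(β)·V) + β·V)·((s*(β)·V + ε)² + β·V·ε)), and BτCR(β) := −(p − c)·β²·ε²·V·V'·s*(β) / ((V·s*(β) + ε)²·((s*(β)·V + ε)² + β·V·ε)). Then as β → ∞: Gτ(β) → ρ, BτLR(β) → 0, and BτCR(β) → −ρ·(p − c)·V'/V; that is, in the supply-constrained limit the listing-side experiment is unbiased while the customer-side experiment has nonvanishing bias. -/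
/-!
The balance equation `(ρ - s)(ε + sV) = β s V` with `0 < s < ρ` gives `β s ≤ ρ (ε + ρ V) / V`,
so the availability `s` tends to `0` like `1/β`, and then the same equation shows
`β s → ρ ε / V`. Every expression of the theorem is a rational function of `s`, `β s` and `β`,
and these two limits determine its limit.
-/

open Filter Topology

lemma mul_le_of_balance {ρ ε V β s : ℝ} (hε : 0 < ε) (hV : 0 < V) (hs : s ∈ Set.Ioo 0 ρ)
    (hbal : (ρ - s) * (ε + s * V) = β * s * V) :
    β * s ≤ ρ * (ε + ρ * V) / V := by
  obtain ⟨hs_pos, hsρ⟩ := hs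
  rw [le_div_iff₀ hV, ← hbal]
  calc (ρ - s) * (ε + s * V) ≤ ρ * (ε + s * V) := by gcongr; linarith
    _ ≤ ρ * (ε + ρ * V) := by gcongr; linarith

section BalanceLimits

variable {ρ ε V : ℝ} {s : ℝ → ℝ}

lemma tendsto_zero_of_balance (hε : 0 < ε) (hV : 0 < V)
    (hs : ∀ β : ℝ, 0 < β → s β ∈ Set.Ioo 0 ρ ∧ (ρ - s β) * (ε + s β * V) = β * s β * V) :
    Tendsto s atTop (𝓝 0) := by
  have hbound : ∀ᶠ β in atTop, 0 ≤ s β ∧ s β ≤ ρ * (ε + ρ * V) / V / β := by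
    filter_upwards [eventually_gt_atTop 0] with β hβ
    obtain ⟨hsβ, hbal⟩ := hs β hβ
    refine ⟨hsβ.1.le, ?_⟩
    rw [le_div_iff₀ hβ, mul_comm]
    exact mul_le_of_balance hε hV hsβ hbal
  exact tendsto_of_tendsto_of_tendsto_of_le_of_le' tendsto_const_nhds
    (tendsto_const_nhds.div_atTop tendsto_id) (hbound.mono fun _ h => h.1)
    (hbound.mono fun _ h => h.2)

lemma tendsto_mul_of_balance (hV : V ≠ 0) (hs0 : Tendsto s atTop (𝓝 0))
    (hbal : ∀ᶠ β in atTop, (ρ - s β) * (ε + s β * V) = β * s β * V) :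
    Tendsto (fun β => β * s β) atTop (𝓝 (ρ * ε / V)) := by
  have hlim : Tendsto (fun β => (ρ - s β) * (ε + s β * V) / V) atTop
      (𝓝 ((ρ - 0) * (ε + 0 * V) / V)) :=
    ((tendsto_const_nhds.sub hs0).mul (tendsto_const_nhds.add (hs0.mul_const V))).div_const V
  rw [sub_zero, zero_mul, add_zero] at hlim
  refine hlim.congr' ?_
  filter_upwards [hbal] with β hβ
  rw [hβ, mul_div_cancel_right₀ _ hV]

variable (p c V' : ℝ)

lemma tendsto_sq_add_mul_atTop (hε : 0 < ε) (hV : 0 < V) (hs0 : Tendsto s atTop (𝓝 0)) :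
    Tendsto (fun β => (s β * V + ε) ^ 2 + β * V * ε) atTop atTop :=
  (((hs0.mul_const V).add_const ε).pow 2).add_atTop
    ((tendsto_id.atTop_mul_const hV).atTop_mul_const hε)

lemma tendsto_profitEffect (hε : 0 < ε) (hV : 0 < V) (hs0 : Tendsto s atTop (𝓝 0))
    (hbs : Tendsto (fun β => β * s β) atTop (𝓝 (ρ * ε / V))) :
    Tendsto
      (fun β => (ρ - s β) + (p - c) * β * s β * V' * ε / ((ε + s β * V) ^ 2 + β * V * ε))
      atTop (𝓝 ρ) := by
  have hnum : Tendsto (fun β => (p - c) * β * s β * V' * ε) atTop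
      (𝓝 ((p - c) * (ρ * ε / V) * V' * ε)) :=
    (((hbs.const_mul (p - c)).mul_const V').mul_const ε).congr fun β => by ring
  have hden := tendsto_sq_add_mul_atTop hε hV hs0
  simp only [add_comm (s _ * V)] at hden
  simpa using (tendsto_const_nhds.sub hs0).add (hnum.div_atTop hden)

lemma tendsto_biasLR (hε : 0 < ε) (hV : 0 < V) (hs0 : Tendsto s atTop (𝓝 0))
    (hbs : Tendsto (fun β => β * s β) atTop (𝓝 (ρ * ε / V))) :
    Tendsto
      (fun β => β * ((p - c) * (-(s β ^ 2) * V * V' * (ε + s β * V))) /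
        (((ε + s β * V) + β * V) * ((s β * V + ε) ^ 2 + β * V * ε)))
      atTop (𝓝 0) := by
  have hnum : Tendsto (fun β => β * ((p - c) * (-(s β ^ 2) * V * V' * (ε + s β * V)))) atTop
      (𝓝 ((p - c) * (-(ρ * ε / V * 0) * V * V' * (ε + 0 * V)))) :=
    ((((hbs.mul hs0).neg.mul_const V).mul_const V').mul
      (tendsto_const_nhds.add (hs0.mul_const V))).const_mul (p - c) |>.congr fun β => by ring
  rw [mul_zero, neg_zero, zero_mul, zero_mul, zero_mul, mul_zero] at hnum
  have hlinear : Tendsto (fun β => (ε + s β * V) + β * V) atTop atTop :=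
    (tendsto_const_nhds.add (hs0.mul_const V)).add_atTop (tendsto_id.atTop_mul_const hV)
  exact hnum.div_atTop (hlinear.atTop_mul_atTop₀ (tendsto_sq_add_mul_atTop hε hV hs0))

lemma tendsto_biasCR (hε : 0 < ε) (hV : 0 < V) (hs0 : Tendsto s atTop (𝓝 0))
    (hbs : Tendsto (fun β => β * s β) atTop (𝓝 (ρ * ε / V))) :
    Tendsto
      (fun β => -((p - c) * β ^ 2 * ε ^ 2 * V * V' * s β) /
        ((V * s β + ε) ^ 2 * ((s β * V + ε) ^ 2 + β * V * ε)))
      atTop (𝓝 (-(ρ * (p - c) * V') / V)) := by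
  -- divide numerator and denominator by `β`
  have hnum : Tendsto (fun β => -((p - c) * ε ^ 2 * V * V' * (β * s β))) atTop
      (𝓝 (-((p - c) * ε ^ 2 * V * V' * (ρ * ε / V)))) :=
    (hbs.const_mul _).neg
  have hden : Tendsto (fun β => (V * s β + ε) ^ 2 * ((s β * V + ε) ^ 2 / β + V * ε)) atTop
      (𝓝 ((V * 0 + ε) ^ 2 * (0 + V * ε))) :=
    (((hs0.const_mul V).add_const ε).pow 2).mul
      ((((hs0.mul_const V).add_const ε).pow 2).div_atTop tendsto_id |>.add_const (V * ε))
  have hlim := hnum.div hden (by positivity)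
  have hval : -((p - c) * ε ^ 2 * V * V' * (ρ * ε / V)) / ((V * 0 + ε) ^ 2 * (0 + V * ε)) =
      -(ρ * (p - c) * V') / V := by
    field_simp
    ring
  rw [hval] at hlim
  refine hlim.congr' ?_
  filter_upwards [eventually_gt_atTop 0] with β hβ
  simp only [Pi.div_apply]
  field_simp

end BalanceLimits

theorem limits_beta_infty_general
    (ρ ε V : ℝ) (p c V' : ℝ) (hε : 0 < ε) (hV : 0 < V)
    (s : ℝ → ℝ)
    (hs : ∀ β : ℝ, 0 < β →
      s β ∈ Set.Ioo 0 ρ ∧ (ρ - s β) * (ε + s β * V) = β * s β * V) :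
    Tendsto
        (fun β =>
          (ρ - s β) + (p - c) * β * s β * V' * ε / ((ε + s β * V) ^ 2 + β * V * ε))
        atTop (𝓝 ρ) ∧
      Tendsto
        (fun β =>
          β * ((p - c) * (-(s β ^ 2) * V * V' * (ε + s β * V))) /
            (((ε + s β * V) + β * V) * ((s β * V + ε) ^ 2 + β * V * ε)))
        atTop (𝓝 0) ∧
      Tendsto
        (fun β =>
          -((p - c) * β ^ 2 * ε ^ 2 * V * V' * s β) /
            ((V * s β + ε) ^ 2 * ((s β * V + ε) ^ 2 + β * V * ε)))
        atTop (𝓝 (-(ρ * (p - c) * V') / V)) := by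
  have hs0 := tendsto_zero_of_balance hε hV hs
  have hbs : Tendsto (fun β => β * s β) atTop (𝓝 (ρ * ε / V)) :=
    tendsto_mul_of_balance hV.ne' hs0
      ((eventually_gt_atTop 0).mono fun β hβ => (hs β hβ).2)
  exact ⟨tendsto_profitEffect p c V' hε hV hs0 hbs, tendsto_biasLR p c V' hε hV hs0 hbs,
    tendsto_biasCR p c V' hε hV hs0 hbs⟩

/-- in the supply-constrained limit β → ∞, the normalized
profit treatment effect tends to ρ, the listing-side bias vanishes, and the
customer-side bias tends to −ρ(p − c)V'/V. -/
theorem limits_beta_infty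
    (ρ ε V : ℝ) (p c V' : ℝ) (hρ : 0 < ρ) (hε : 0 < ε) (hV : 0 < V)
    (s : ℝ → ℝ)
    (hs : ∀ β : ℝ, 0 < β →
      s β ∈ Set.Ioo 0 ρ ∧ (ρ - s β) * (ε + s β * V) = β * s β * V) :
    Tendsto
        (fun β =>
          (ρ - s β) + (p - c) * β * s β * V' * ε / ((ε + s β * V) ^ 2 + β * V * ε))
        atTop (𝓝 ρ) ∧
      Tendsto
        (fun β =>
          β * ((p - c) * (-(s β ^ 2) * V * V' * (ε + s β * V))) /
            (((ε + s β * V) + β * V) * ((s β * V + ε) ^ 2 + β * V * ε)))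
        atTop (𝓝 0) ∧
      Tendsto
        (fun β =>
          -((p - c) * β ^ 2 * ε ^ 2 * V * V' * s β) /
            ((V * s β + ε) ^ 2 * ((s β * V + ε) ^ 2 + β * V * ε)))
        atTop (𝓝 (-(ρ * (p - c) * V') / V)) :=
  limits_beta_infty_general ρ ε V p c V' hε hV s hs
end
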